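/- arXiv:1410.0938 — 3 statements merged into one kernel-verified Lean document; each statement's English description precedes it below -/
import Mathlib

section
/- Let Λ and Ω be sets of nonnegative real numbers. If Λ and Ω both satisfy ACC, then the set Λ·Ω = {ab | a ∈ Λ, b ∈ Ω} also satisfies ACC. (Part of Lemma 2.1(1).) -/
/-- A set of real numbers satisfies ACC if it contains no infinite strictly
increasing sequence. -/
def SatisfiesACC (S : Set ℝ) : Prop :=
  ¬ ∃ f : ℕ → ℝ, (∀ n, f n ∈ S) ∧ StrictMono f

theorem acc_mul (Λ Ω : Set ℝ) (hΛ0 : ∀ a ∈ Λ, 0 ≤ a) (hΩ0 : ∀ b ∈ Ω, 0 ≤ b)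
    (hΛ : SatisfiesACC Λ) (hΩ : SatisfiesACC Ω) :
    SatisfiesACC {x : ℝ | ∃ a ∈ Λ, ∃ b ∈ Ω, x = a * b} := by
  rintro ⟨f, hf, hmono⟩
  choose a ha b hb hab using hf
  -- extract a subsequence on which a is nonincreasing
  obtain ⟨g₁, hg₁ | hg₁⟩ := exists_increasing_or_nonincreasing_subseq' (· < ·) a
  · exact hΛ ⟨a ∘ g₁, fun n => ha _, strictMono_nat_of_lt_succ hg₁⟩
  · -- extract a further subsequence on which b is nonincreasing
    obtain ⟨g₂, hg₂ | hg₂⟩ :=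
      exists_increasing_or_nonincreasing_subseq' (· < ·) (fun n => b (g₁ n))
    · exact hΩ ⟨(fun n => b (g₁ n)) ∘ g₂, fun n => hb _, strictMono_nat_of_lt_succ hg₂⟩
    · have h01 : g₁ (g₂ 0) < g₁ (g₂ 1) := g₁.strictMono (g₂.strictMono Nat.zero_lt_one)
      have hflt : f (g₁ (g₂ 0)) < f (g₁ (g₂ 1)) := hmono h01
      have haa : a (g₁ (g₂ 1)) ≤ a (g₁ (g₂ 0)) :=
        not_lt.mp (hg₁ (g₂ 0) (g₂ 1) (g₂.strictMono Nat.zero_lt_one))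
      have hbb : b (g₁ (g₂ 1)) ≤ b (g₁ (g₂ 0)) := not_lt.mp (hg₂ 0 1 Nat.zero_lt_one)
      have : f (g₁ (g₂ 1)) ≤ f (g₁ (g₂ 0)) := by
        rw [hab, hab]
        exact mul_le_mul haa hbb (hΩ0 _ (hb _)) (hΛ0 _ (ha _))
      exact absurd hflt this.not_gt
end

section
/- Let m and l be natural numbers, and let Λ be a set of nonnegative real numbers satisfying DCC such that a ≤ l for every a ∈ Λ. Then the set {⟨ma⟩ | a ∈ Λ} of fractional parts also satisfies DCC. (Lemma 2.1(4).) -/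
/-- A set of real numbers satisfies DCC if it contains no infinite strictly
decreasing sequence. -/
def SatisfiesDCC (S : Set ℝ) : Prop :=
  ¬ ∃ f : ℕ → ℝ, (∀ n, f n ∈ S) ∧ StrictAnti f

/-!
Multiplication by `m ≥ 0` is monotone, so `mΛ` again satisfies DCC; it is bounded below by its
minimum and above by `m * l`. Hence only finitely many integers `k` occur as `⌊m a⌋`, and where
`⌊x⌋ = k` the fractional part is the monotone map `x ↦ x - k`. So `{⟨m a⟩}` lies in a finite
union of monotone images of `mΛ`, each of which satisfies DCC.
-/

theorem satisfiesDCC_iff_isWF {S : Set ℝ} : SatisfiesDCC S ↔ S.IsWF := by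
  simp only [Set.isWF_iff_no_descending_seq, SatisfiesDCC, not_exists, not_and]
  exact forall_congr' fun _ => imp_not_comm

namespace Set.IsWF

variable {α : Type*} [LinearOrder α] {s : Set α}

theorem image_of_monotone {β : Type*} [Preorder β] (hs : s.IsWF) {f : α → β}
    (hf : Monotone f) : (f '' s).IsWF :=
  (hs.isPWO.image_of_monotone hf).isWF

theorem bddBelow [Nonempty α] (hs : s.IsWF) : BddBelow s := by
  rcases s.eq_empty_or_nonempty with rfl | hne
  · exact bddBelow_empty
  · exact ⟨hs.min hne, fun _ hb => hs.min_le hne hb⟩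

theorem image_fract [Ring α] [IsStrictOrderedRing α] [FloorRing α] (hs : s.IsWF)
    (hbdd : BddAbove s) : (Int.fract '' s).IsWF := by
  obtain ⟨lo, hlo⟩ := hs.bddBelow
  obtain ⟨hi, hhi⟩ := hbdd
  have hcover :
      Int.fract '' s ⊆ ⋃ k ∈ Finset.Icc ⌊lo⌋ ⌊hi⌋, (· - (k : α)) '' s := by
    rintro _ ⟨x, hx, rfl⟩
    simp only [Set.mem_iUnion, Finset.mem_Icc]
    exact ⟨⌊x⌋, ⟨Int.floor_le_floor (hlo hx), Int.floor_le_floor (hhi hx)⟩, x, hx, rfl⟩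
  refine ((Finset.isWF_bUnion _).2 fun _ _ => ?_).mono hcover
  exact hs.image_of_monotone fun _ _ h => sub_le_sub_right h _

end Set.IsWF

theorem dcc_fract_general (m l : ℕ) (Λ : Set ℝ)
    (hl : ∀ a ∈ Λ, a ≤ (l : ℝ)) (hΛ : SatisfiesDCC Λ) :
    SatisfiesDCC {x : ℝ | ∃ a ∈ Λ, x = Int.fract ((m : ℝ) * a)} := by
  rw [satisfiesDCC_iff_isWF] at hΛ ⊢
  have hmΛ : (((m : ℝ) * ·) '' Λ).IsWF :=
    hΛ.image_of_monotone (monotone_mul_left_of_nonneg m.cast_nonneg)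
  have hbdd : BddAbove (((m : ℝ) * ·) '' Λ) := by
    refine ⟨m * l, ?_⟩
    rintro _ ⟨a, ha, rfl⟩
    exact mul_le_mul_of_nonneg_left (hl a ha) m.cast_nonneg
  have hset : {x : ℝ | ∃ a ∈ Λ, x = Int.fract ((m : ℝ) * a)} =
      Int.fract '' (((m : ℝ) * ·) '' Λ) := by
    ext x
    simp [eq_comm]
  exact hset ▸ hmΛ.image_fract hbdd

theorem dcc_fract (m l : ℕ) (Λ : Set ℝ) (h0 : ∀ a ∈ Λ, 0 ≤ a)
    (hl : ∀ a ∈ Λ, a ≤ (l : ℝ)) (hΛ : SatisfiesDCC Λ) :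
    SatisfiesDCC {x : ℝ | ∃ a ∈ Λ, x = Int.fract ((m : ℝ) * a)} :=
  dcc_fract_general m l Λ hl hΛ
end

section
/- Let Λ be a set of nonnegative real numbers satisfying DCC. For each i ∈ ℕ suppose given a natural number l_i ≥ 1, a natural number k_i ≥ 1, natural numbers n_{1,i},…,n_{k_i,i} and elements λ_{1,i},…,λ_{k_i,i} ∈ Λ, and set a_i := 1 − 1/l_i + (1/l_i)·Σ_{s=1}^{k_i} n_{s,i} λ_{s,i}. Assume that a_i ≤ 1 for every i, that n_{1,i} ≥ 1 for every i, and that the set {λ_{1,i} | i ∈ ℕ} is infinite. Then the set {a_i | i ∈ ℕ} is infinite. (This is the arithmetic content of Lemma 4.6: if the distinguished coefficients λ_{1,i} of the boundary or nef part take infinitely many values and contribute nontrivially (n_{1,i} > 0) to the adjunction coefficient a_i, then the adjunction coefficients a_i take infinitely many values.) -/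
/-!
Since `Λ` satisfies DCC it is partially well-ordered, and so is the additive monoid it generates
(its elements being nonnegative). Fix a value `α ≤ 1` of the coefficients. For every `i` with
`a i = α` we have `λ₁ᵢ + rᵢ + lᵢ (1 - α) = 1`, where `rᵢ := ∑ₛ nₛᵢ λₛᵢ - λ₁ᵢ` lies in that monoid
because `n₁ᵢ ≥ 1`. All three summands grow with `(λ₁ᵢ, rᵢ, lᵢ)` in the product order, so two
comparable triples have the same `λ₁`; by partial well-order, `λ₁` takes finitely many values on
each fibre of `a`. Hence finitely many values of `a` would force finitely many values of `λ₁`.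
-/

theorem SatisfiesDCC.isPWO {S : Set ℝ} (hS : SatisfiesDCC S) : S.IsPWO :=
  (Set.isWF_iff_no_descending_seq.2 fun f hf hmem => hS ⟨f, hmem, hf⟩).isPWO

theorem Set.IsPWO.finite_image_of_le_imp_eq {ι α β : Type*} [Preorder α] {s : Set ι}
    {F : ι → α} {f : ι → β} (hF : (F '' s).IsPWO)
    (hf : ∀ i ∈ s, ∀ j ∈ s, F i ≤ F j → f i = f j) : (f '' s).Finite := by
  by_contra h
  let e := Set.Infinite.natEmbedding _ h
  choose g hgs hgf using fun m => (e m).2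
  obtain ⟨p, q, hpq, hle⟩ := hF.exists_lt (f := F ∘ g) fun m => Set.mem_image_of_mem F (hgs m)
  refine hpq.ne (e.injective (Subtype.ext ?_))
  rw [← hgf, ← hgf]
  exact hf _ (hgs p) _ (hgs q) hle

theorem sum_nsmul_sub_mem_addSubmonoid_closure {ι M : Type*} [Fintype ι] [AddCommGroup M]
    {S : Set M} {n : ι → ℕ} {x : ι → M} (hx : ∀ i, x i ∈ S) {i₀ : ι} (hi₀ : 1 ≤ n i₀) :
    ∑ i, n i • x i - x i₀ ∈ AddSubmonoid.closure S := by
  classical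
  obtain ⟨m, hm⟩ : ∃ m, n i₀ = m + 1 := ⟨n i₀ - 1, by omega⟩
  have hsplit : ∑ i, n i • x i - x i₀ = m • x i₀ + ∑ i ∈ Finset.univ.erase i₀, n i • x i := by
    rw [← Finset.add_sum_erase _ _ (Finset.mem_univ i₀), hm, succ_nsmul]
    abel
  rw [hsplit]
  exact add_mem (nsmul_mem (AddSubmonoid.subset_closure (hx i₀)) m)
    (sum_mem fun i _ => nsmul_mem (AddSubmonoid.subset_closure (hx i)) _)

theorem eq_of_add_add_mul_eq_of_le {x x' y y' c : ℝ} {m m' : ℕ} (hc : 0 ≤ c) (hx : x ≤ x')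
    (hy : y ≤ y') (hm : m ≤ m') (h : x + y + m * c = x' + y' + m' * c) : x = x' := by
  have : (m : ℝ) * c ≤ m' * c := mul_le_mul_of_nonneg_right (by exact_mod_cast hm) hc
  linarith

theorem infinite_adjunction_coeffs (Λ : Set ℝ) (h0 : ∀ a ∈ Λ, 0 ≤ a)
    (hΛ : SatisfiesDCC Λ) (l k : ℕ → ℕ) (hl : ∀ i, 1 ≤ l i) (hk : ∀ i, 1 ≤ k i)
    (n : (i : ℕ) → Fin (k i) → ℕ) (lam : (i : ℕ) → Fin (k i) → ℝ)
    (hlam : ∀ i s, lam i s ∈ Λ) (a : ℕ → ℝ)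
    (ha : ∀ i, a i = 1 - 1 / (l i : ℝ) +
      (1 / (l i : ℝ)) * ∑ s, (n i s : ℝ) * lam i s)
    (ha1 : ∀ i, a i ≤ 1)
    (hn1 : ∀ i, 1 ≤ n i ⟨0, hk i⟩)
    (hinf : {x : ℝ | ∃ i, x = lam i ⟨0, hk i⟩}.Infinite) :
    {x : ℝ | ∃ i, x = a i}.Infinite := by
  set lam₁ : ℕ → ℝ := fun i => lam i ⟨0, hk i⟩
  set r : ℕ → ℝ := fun i => ∑ s, n i s • lam i s - lam₁ i
  have hr : ∀ i, r i ∈ AddSubmonoid.closure Λ := fun i =>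
    sum_nsmul_sub_mem_addSubmonoid_closure (hlam i) (hn1 i)
  have hsum : ∀ i, lam₁ i + r i + l i * (1 - a i) = 1 := fun i => by
    have hli : (l i : ℝ) ≠ 0 := by exact_mod_cast (Nat.one_le_iff_ne_zero.1 (hl i))
    simp only [r, nsmul_eq_mul, ha i]
    field_simp
    ring
  have hPWO : (Λ ×ˢ (AddSubmonoid.closure Λ : Set ℝ) ×ˢ (Set.univ : Set ℕ)).IsPWO :=
    hΛ.isPWO.prod ((hΛ.isPWO.addSubmonoid_closure h0).prod (Set.isPWO_of_wellQuasiOrderedLE _))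
  have hfibre : ∀ α, (lam₁ '' {i | a i = α}).Finite := fun α => by
    refine Set.IsPWO.finite_image_of_le_imp_eq (F := fun i => (lam₁ i, r i, l i))
      (hPWO.mono (Set.image_subset_iff.2 fun i _ => ⟨hlam _ _, hr i, trivial⟩)) ?_
    rintro i (hi : a i = α) j (hj : a j = α) ⟨hlam₁, hrij, hlij⟩
    have hji : a j = a i := hj.trans hi.symm
    exact eq_of_add_add_mul_eq_of_le (sub_nonneg.2 (ha1 i)) hlam₁ hrij hlij
      (by rw [hsum i, ← hji, hsum j])
  intro hfin
  refine hinf ((hfin.biUnion fun α _ => hfibre α).subset ?_)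
  rintro _ ⟨i, rfl⟩
  exact Set.mem_biUnion ⟨i, rfl⟩ ⟨i, rfl, rfl⟩
end
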